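/- arXiv:1906.05089 — 2 statements merged into one kernel-verified Lean document; each statement's English description precedes it below -/
import Mathlib

section
/- Let n ≥ 3 and let f be an irredundant broadcast on the cycle C_n whose cost equals the upper broadcast irredundance number IR_b(C_n). If H_f(x_i) = ∅ for some vertex x_i of C_n, then H_f(x_{i−1}) ≠ ∅ and H_f(x_{i+1}) ≠ ∅ (indices taken modulo n). -/
/-!
Suppose two consecutive vertices `x_j`, `x_{j+1}` hear nothing. Every broadcast vertex `v` owns a
geodesic segment of `f v + 1` vertices, all of which hear `v`: the segment from `v` to a private
border vertex, or, when `PB_f(v) = {v}`, the edge from `v` to `v + 1`. Privacy of these endpoints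
makes the segments pairwise disjoint, and none of them meets `{x_j, x_{j+1}}`, so
`σ(f) + |V_f^+| ≤ n - 2`. Moreover `f v < d(x_j, v) ≤ ⌊n/2⌋` for every broadcast vertex. Together
these bounds give `σ(f) < 2⌊n/2⌋ - 2` as soon as `f ≠ 0`, and `2⌊n/2⌋ - 2` is the cost of the
irredundant broadcast giving power `⌊n/2⌋ - 1` to two adjacent vertices; if `f = 0`, a single vertex
of power `1` already beats it.
-/

open SimpleGraph

namespace Broadcast

variable {V : Type*} [Fintype V]

/-- The eccentricity of a vertex: the maximum distance from `v` to any vertex. -/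
noncomputable def ecc (G : SimpleGraph V) (v : V) : ℕ :=
  Finset.univ.sup fun u => G.dist v u

/-- A broadcast on `G`: `f v ≤ e_G(v)` for every vertex `v`. -/
def IsBroadcast (G : SimpleGraph V) (f : V → ℕ) : Prop :=
  ∀ v, f v ≤ ecc G v

/-- The cost of a broadcast. -/
def cost (f : V → ℕ) : ℕ := ∑ v, f v

/-- `hears G f u` is H_f(u): the set of f-broadcast vertices `v` with `d(u,v) ≤ f v`. -/
def hears (G : SimpleGraph V) (f : V → ℕ) (u : V) : Set V :=
  {v | 1 ≤ f v ∧ G.dist u v ≤ f v}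

/-- A dominating broadcast: every vertex hears some broadcast vertex. -/
def IsDominating (G : SimpleGraph V) (f : V → ℕ) : Prop :=
  IsBroadcast G f ∧ ∀ u, (hears G f u).Nonempty

/-- A minimal dominating broadcast. -/
def IsMinimalDominating (G : SimpleGraph V) (f : V → ℕ) : Prop :=
  IsDominating G f ∧ ∀ g, IsDominating G g → (∀ v, g v ≤ f v) → g = f

/-- The broadcast domination number γ_b: minimum cost of a dominating broadcast. -/
noncomputable def broadcastDomination (G : SimpleGraph V) : ℕ :=
  sInf {c | ∃ f, IsDominating G f ∧ cost f = c}

/-- The upper broadcast domination number Γ_b: maximum cost of a minimal dominating broadcast. -/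
noncomputable def upperBroadcastDomination (G : SimpleGraph V) : ℕ :=
  sSup {c | ∃ f, IsMinimalDominating G f ∧ cost f = c}

/-- The private f-neighborhood PN_f(v): vertices hearing only `v`. -/
def privateNbhd (G : SimpleGraph V) (f : V → ℕ) (v : V) : Set V :=
  {u | hears G f u = {v}}

open Classical in
/-- The private f-border PB_f(v). -/
noncomputable def privateBorder (G : SimpleGraph V) (f : V → ℕ) (v : V) : Set V :=
  if f v = 1 ∧ privateNbhd G f v = {v} then {v}
  else {u | u ∈ privateNbhd G f v ∧ G.dist u v = f v}

/-- An irredundant broadcast: every broadcast vertex has a nonempty private border. -/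
def IsIrredundant (G : SimpleGraph V) (f : V → ℕ) : Prop :=
  IsBroadcast G f ∧ ∀ v, 1 ≤ f v → (privateBorder G f v).Nonempty

/-- A maximal irredundant broadcast. -/
def IsMaximalIrredundant (G : SimpleGraph V) (f : V → ℕ) : Prop :=
  IsIrredundant G f ∧ ∀ g, IsIrredundant G g → (∀ v, f v ≤ g v) → g = f

/-- The upper broadcast irredundance number IR_b: maximum cost of an irredundant broadcast. -/
noncomputable def upperBroadcastIrredundance (G : SimpleGraph V) : ℕ :=
  sSup {c | ∃ f, IsIrredundant G f ∧ cost f = c}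

/-- The broadcast irredundance number ir_b: minimum cost of a maximal irredundant broadcast. -/
noncomputable def broadcastIrredundance (G : SimpleGraph V) : ℕ :=
  sInf {c | ∃ f, IsMaximalIrredundant G f ∧ cost f = c}

/-- An independent broadcast: every broadcast vertex hears only itself, i.e. |H_f(v)| = 1. -/
def IsIndependent (G : SimpleGraph V) (f : V → ℕ) : Prop :=
  IsBroadcast G f ∧ ∀ v, 1 ≤ f v → hears G f v = {v}

/-- A maximal independent broadcast. -/
def IsMaximalIndependent (G : SimpleGraph V) (f : V → ℕ) : Prop :=
  IsIndependent G f ∧ ∀ g, IsIndependent G g → (∀ v, f v ≤ g v) → g = f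

/-- The broadcast independence number β_b: maximum cost of an independent broadcast. -/
noncomputable def broadcastIndependence (G : SimpleGraph V) : ℕ :=
  sSup {c | ∃ f, IsIndependent G f ∧ cost f = c}

/-- The lower broadcast independence number i_b: minimum cost of a maximal independent broadcast. -/
noncomputable def lowerBroadcastIndependence (G : SimpleGraph V) : ℕ :=
  sInf {c | ∃ f, IsMaximalIndependent G f ∧ cost f = c}

/-- A packing broadcast: every vertex hears at most one broadcast vertex. -/
def IsPacking (G : SimpleGraph V) (f : V → ℕ) : Prop :=
  IsBroadcast G f ∧ ∀ u, (hears G f u).Subsingleton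

/-- A maximal packing broadcast. -/
def IsMaximalPacking (G : SimpleGraph V) (f : V → ℕ) : Prop :=
  IsPacking G f ∧ ∀ g, IsPacking G g → (∀ v, f v ≤ g v) → g = f

/-- The broadcast packing number P_b: maximum cost of a packing broadcast. -/
noncomputable def broadcastPacking (G : SimpleGraph V) : ℕ :=
  sSup {c | ∃ f, IsPacking G f ∧ cost f = c}

/-- The lower broadcast packing number p_b: minimum cost of a maximal packing broadcast. -/
noncomputable def lowerBroadcastPacking (G : SimpleGraph V) : ℕ :=
  sInf {c | ∃ f, IsMaximalPacking G f ∧ cost f = c}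

end Broadcast

open Finset

namespace SimpleGraph

variable {V : Type*} {G : SimpleGraph V} {u v w z : V}

theorem Walk.dist_add_dist_le_length (p : G.Walk u w) (hz : z ∈ p.support) :
    G.dist u z + G.dist z w ≤ p.length := by
  classical
  rw [← p.take_spec hz, Walk.length_append]
  exact add_le_add (dist_le _) (dist_le _)

theorem Walk.le_add_length {φ : V → ℕ} (hφ : ∀ x y, G.Adj x y → φ x ≤ φ y + 1) :
    ∀ {u v : V} (p : G.Walk u v), φ u ≤ φ v + p.length
  | _, _, .nil => by simp
  | _, _, .cons h p => by
    have := hφ _ _ h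
    have := p.le_add_length hφ
    rw [Walk.length_cons]
    omega

theorem Reachable.le_add_dist {φ : V → ℕ} (hφ : ∀ x y, G.Adj x y → φ x ≤ φ y + 1)
    (h : G.Reachable u v) : φ u ≤ φ v + G.dist u v := by
  obtain ⟨p, hp⟩ := h.exists_walk_length_eq_dist
  exact hp ▸ p.le_add_length hφ

theorem Connected.dist_le_dist_add_dist (hG : G.Connected) (z x y : V) :
    G.dist x y ≤ G.dist z x + G.dist z y := by
  rw [dist_comm (u := z) (v := x)]
  exact hG.dist_triangle

section cycleGraph

variable {n : ℕ}

theorem cycleGraph_connected_of_pos (hn : 0 < n) : (cycleGraph n).Connected :=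
  (connected_iff _).2 ⟨cycleGraph_preconnected, ⟨⟨0, hn⟩⟩⟩

theorem cycleGraph_adj_iff_val (hn : 2 ≤ n) {x y : Fin n} :
    (cycleGraph n).Adj x y ↔
      x.val + 1 = y.val ∨ y.val + 1 = x.val ∨ x.val + n = y.val + 1 ∨ y.val + n = x.val + 1 := by
  have hsub : ∀ a b : Fin n, (a - b).val = 1 ↔ a.val = b.val + 1 ∨ a.val + n = b.val + 1 := by
    intro a b
    have := a.isLt
    rcases le_or_gt b a with h | h
    · rw [Fin.sub_val_of_le h]
      omega
    · rw [Fin.coe_sub_iff_lt.2 h]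
      omega
  rw [cycleGraph_adj', hsub, hsub]
  omega

theorem cycleGraph_adj_add_one [NeZero n] (hn : 2 ≤ n) (x : Fin n) :
    (cycleGraph n).Adj x (x + 1) := by
  rw [cycleGraph_adj', add_sub_cancel_left, Fin.val_one', Nat.mod_eq_of_lt hn]
  exact Or.inr rfl

theorem dist_cycleGraph_le_sub (hn : 2 ≤ n) {x y : Fin n} (h : x.val ≤ y.val) :
    (cycleGraph n).dist x y ≤ y.val - x.val := by
  induction hk : y.val - x.val generalizing y with
  | zero => simp [Fin.ext (by omega : y.val = x.val)]
  | succ k ih =>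
    let y' : Fin n := ⟨y.val - 1, by omega⟩
    have hadj : (cycleGraph n).Adj y' y :=
      (cycleGraph_adj_iff_val hn).2 (.inl (by simp only [y']; omega))
    calc (cycleGraph n).dist x y ≤ (cycleGraph n).dist x y' + (cycleGraph n).dist y' y :=
          (cycleGraph_preconnected x y').dist_triangle_left y
      _ ≤ k + 1 := add_le_add (ih (by simp only [y']; omega) (by simp only [y']; omega))
          (dist_eq_one_iff_adj.2 hadj).le

theorem dist_cycleGraph_of_val_le (hn : 2 ≤ n) {x y : Fin n} (h : x.val ≤ y.val) :
    (cycleGraph n).dist x y = min (y.val - x.val) (n - (y.val - x.val)) := by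
  have hy := y.isLt
  refine le_antisymm (le_min (dist_cycleGraph_le_sub hn h) ?_) ?_
  · let first : Fin n := ⟨0, by omega⟩
    let last : Fin n := ⟨n - 1, by omega⟩
    have hG := cycleGraph_connected_of_pos (n := n) (by omega)
    have hwrap : (cycleGraph n).Adj last first :=
      (cycleGraph_adj_iff_val hn).2 (by simp only [first, last]; omega)
    have h₁ : (cycleGraph n).dist first x ≤ x.val := dist_cycleGraph_le_sub hn (Nat.zero_le _)
    have h₂ : (cycleGraph n).dist last y ≤ n - 1 - y.val :=
      SimpleGraph.dist_comm.trans_le (dist_cycleGraph_le_sub hn (show y.val ≤ n - 1 by omega))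
    have t₁ := hG.dist_le_dist_add_dist first x y
    have t₂ := hG.dist_le_dist_add_dist last first y
    rw [dist_eq_one_iff_adj.2 hwrap] at t₂
    omega
  · -- the cyclic distance to `x` changes by at most one along an edge
    have hφ := (cycleGraph_preconnected y x).le_add_dist
      (φ := fun z : Fin n =>
        min (z.val - x.val + (x.val - z.val)) (n - (z.val - x.val + (x.val - z.val))))
      (fun a b hab => by
        have := a.isLt; have := b.isLt
        rw [cycleGraph_adj_iff_val hn] at hab
        omega)
    rw [SimpleGraph.dist_comm] at hφ
    simp only [Nat.sub_self, add_zero] at hφ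
    omega

theorem dist_cycleGraph (hn : 2 ≤ n) (x y : Fin n) :
    (cycleGraph n).dist x y =
      min (x.val - y.val + (y.val - x.val)) (n - (x.val - y.val + (y.val - x.val))) := by
  rcases le_total x.val y.val with h | h
  · rw [dist_cycleGraph_of_val_le hn h]
    omega
  · rw [SimpleGraph.dist_comm, dist_cycleGraph_of_val_le hn h]
    omega

theorem dist_cycleGraph_le_half (hn : 2 ≤ n) (x y : Fin n) : (cycleGraph n).dist x y ≤ n / 2 := by
  rw [dist_cycleGraph hn]
  omega

end cycleGraph

end SimpleGraph

namespace Broadcast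

section general

variable {V : Type*} {G : SimpleGraph V} {f : V → ℕ} {u v w b b' z : V}

theorem eq_of_hears_eq_singleton (h : hears G f u = {v}) (hw : 1 ≤ f w) (hd : G.dist u w ≤ f w) :
    w = v := by
  have hw : w ∈ hears G f u := ⟨hw, hd⟩
  rwa [h] at hw

theorem lt_dist_of_hears_eq_empty (h : hears G f u = ∅) (hv : 1 ≤ f v) : f v < G.dist u v := by
  by_contra! hd
  exact (h ▸ (⟨hv, hd⟩ : v ∈ hears G f u) : v ∈ (∅ : Set V))

/-- Either `b` is a private border vertex of `v`, or `PB_f(v) = {v}` and `b` is a neighbour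
of `v`. -/
def IsAnchor (G : SimpleGraph V) (f : V → ℕ) (v b : V) : Prop :=
  G.dist v b = f v ∧ (hears G f b = {v} ∨ f v = 1 ∧ hears G f v = {v})

theorem IsAnchor.mem_hears (hb : IsAnchor G f v b) (hv : 1 ≤ f v) : v ∈ hears G f b :=
  ⟨hv, by rw [SimpleGraph.dist_comm, hb.1]⟩

theorem IsAnchor.lt_dist (hb : IsAnchor G f v b) (hw : 1 ≤ f w) (hvw : v ≠ w) :
    f w < G.dist b w ∨ f v = 1 ∧ f w < G.dist v w := by
  rcases hb.2 with hpriv | ⟨h1, hpriv⟩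
  · exact Or.inl (not_le.1 fun hd => hvw (eq_of_hears_eq_singleton hpriv hw hd).symm)
  · exact Or.inr ⟨h1, not_le.1 fun hd => hvw (eq_of_hears_eq_singleton hpriv hw hd).symm⟩

variable [Fintype V]

/-- The set `V_f^+`. -/
def broadcastVertices (f : V → ℕ) : Finset V := {v | 1 ≤ f v}

open Classical in
noncomputable def heardVertices (G : SimpleGraph V) (f : V → ℕ) : Finset V :=
  {u | (hears G f u).Nonempty}

noncomputable def segment (G : SimpleGraph V) (u w : V) : Finset V :=
  {z | G.dist u z + G.dist z w ≤ G.dist u w}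

theorem mem_broadcastVertices : v ∈ broadcastVertices f ↔ 1 ≤ f v := by
  simp [broadcastVertices]

theorem cost_eq_sum_broadcastVertices (f : V → ℕ) :
    cost f = ∑ v ∈ broadcastVertices f, f v :=
  (sum_filter_of_ne fun _ _ hv => Nat.one_le_iff_ne_zero.2 hv).symm

theorem dist_le_ecc (G : SimpleGraph V) (v u : V) : G.dist v u ≤ ecc G v :=
  le_sup (f := fun u => G.dist v u) (mem_univ u)

theorem card_heardVertices_le (hu : hears G f u = ∅) (hw : hears G f w = ∅) (huw : u ≠ w) :
    #(heardVertices G f) ≤ Fintype.card V - 2 := by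
  classical
  calc #(heardVertices G f) ≤ #({u, w}ᶜ : Finset V) := card_le_card fun x hx => by
        simp only [heardVertices, mem_filter, mem_univ, true_and] at hx
        simp only [mem_compl, mem_insert, mem_singleton]
        rintro (rfl | rfl) <;> simp_all
    _ = Fintype.card V - 2 := by rw [card_compl, card_pair huw]

theorem cost_le_sum_ecc (hf : IsBroadcast G f) : cost f ≤ ∑ v, ecc G v :=
  sum_le_sum fun v _ => hf v

theorem IsIrredundant.cost_le_upperBroadcastIrredundance (hf : IsIrredundant G f) :
    cost f ≤ upperBroadcastIrredundance G :=
  le_csSup ⟨∑ v, ecc G v, by rintro _ ⟨g, hg, rfl⟩; exact cost_le_sum_ecc hg.1⟩ ⟨f, hf, rfl⟩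

theorem isIrredundant_of_forall_exists_hears_eq_singleton
    (h : ∀ v, 1 ≤ f v → ∃ b, hears G f b = {v} ∧ G.dist b v = f v) : IsIrredundant G f := by
  refine ⟨fun v => ?_, fun v hv => ?_⟩
  · rcases Nat.eq_zero_or_pos (f v) with h0 | hpos
    · simp [h0]
    · obtain ⟨b, -, hb⟩ := h v hpos
      rw [← hb, SimpleGraph.dist_comm]
      exact dist_le_ecc G v b
  · obtain ⟨b, hb, hdist⟩ := h v hv
    unfold privateBorder
    split_ifs
    · exact Set.singleton_nonempty v
    · exact ⟨b, hb, hdist⟩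

theorem one_le_upperBroadcastIrredundance (h : G.Adj v u) : 1 ≤ upperBroadcastIrredundance G := by
  classical
  have hirr : IsIrredundant G fun x => if x = v then 1 else 0 := by
    refine isIrredundant_of_forall_exists_hears_eq_singleton fun x hx => ⟨u, ?_, ?_⟩
    all_goals obtain rfl : x = v := by by_contra hxv; simp [hxv] at hx
    · ext y
      simp only [hears, Set.mem_ofPred_eq, Set.mem_singleton_iff]
      constructor
      · rintro ⟨hy, -⟩
        by_contra hyx
        simp [hyx] at hy
      · rintro rfl
        simp [(dist_eq_one_iff_adj.2 h.symm).le]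
    · simp [dist_eq_one_iff_adj.2 h.symm]
  simpa [cost] using hirr.cost_le_upperBroadcastIrredundance

theorem IsIrredundant.exists_isAnchor (hf : IsIrredundant G f) (hv : 1 ≤ f v) (hadj : G.Adj v u) :
    ∃ b, IsAnchor G f v b ∧ (hears G f b = {v} ∨ b = u) := by
  obtain ⟨b, hb⟩ := hf.2 v hv
  unfold privateBorder at hb
  split_ifs at hb with hPB
  · have hv : v ∈ privateNbhd G f v := hPB.2 ▸ rfl
    exact ⟨u, ⟨by rw [dist_eq_one_iff_adj.2 hadj, hPB.1], Or.inr ⟨hPB.1, hv⟩⟩, Or.inr rfl⟩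
  · exact ⟨b, ⟨by rw [SimpleGraph.dist_comm, hb.2], Or.inl hb.1⟩, Or.inl hb.1⟩

theorem IsAnchor.mem_hears_of_mem_segment (hb : IsAnchor G f v b) (hv : 1 ≤ f v)
    (hz : z ∈ segment G v b) : v ∈ hears G f z := by
  simp only [segment, mem_filter, mem_univ, true_and, hb.1] at hz
  exact ⟨hv, by rw [SimpleGraph.dist_comm]; omega⟩

theorem dist_add_one_le_card_segment (hG : G.Connected) (u w : V) :
    G.dist u w + 1 ≤ #(segment G u w) := by
  classical
  obtain ⟨p, hp, hlen⟩ := hG.exists_path_of_dist u w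
  calc G.dist u w + 1 = #p.support.toFinset := by
        rw [List.toFinset_card_of_nodup hp.support_nodup, Walk.length_support, hlen]
    _ ≤ #(segment G u w) := card_le_card fun z hz => by
        simpa [segment, hlen] using p.dist_add_dist_le_length (List.mem_toFinset.1 hz)

theorem disjoint_segment_of_isAnchor (hG : G.Connected) (hv : 1 ≤ f v) (hw : 1 ≤ f w)
    (hvw : v ≠ w) (hbb' : b ≠ b') (hb : IsAnchor G f v b) (hb' : IsAnchor G f w b') :
    Disjoint (segment G v b) (segment G w b') := by
  refine disjoint_left.2 fun z hz hz' => ?_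
  simp only [segment, mem_filter, mem_univ, true_and, hb.1, hb'.1, SimpleGraph.dist_comm (u := v),
    SimpleGraph.dist_comm (u := w)] at hz hz'
  have hbw := hb.lt_dist hw hvw
  have hb'v := hb'.lt_dist hv hvw.symm
  have t₁ := hG.dist_le_dist_add_dist z b w
  have t₂ := hG.dist_le_dist_add_dist z v w
  have t₃ := hG.dist_le_dist_add_dist z b' v
  have t₄ := hG.dist_le_dist_add_dist z w v
  have t₅ := hG.dist_le_dist_add_dist z b b'
  have := hG.pos_dist_of_ne hbb'
  omega

theorem IsIrredundant.cost_add_card_le (hG : G.Connected) {s : V → V}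
    (hs : Function.Injective s) (hadj : ∀ v, G.Adj v (s v)) (hf : IsIrredundant G f) :
    cost f + #(broadcastVertices f) ≤ #(heardVertices G f) := by
  classical
  choose! b hb using fun v (hv : v ∈ broadcastVertices f) =>
    hf.exists_isAnchor (mem_broadcastVertices.1 hv) (hadj v)
  have hinj : ∀ v ∈ broadcastVertices f, ∀ w ∈ broadcastVertices f, b v = b w → v = w := by
    intro v hv w hw he
    have hvb := (hb v hv).1.mem_hears (mem_broadcastVertices.1 hv)
    have hwb := (hb w hw).1.mem_hears (mem_broadcastVertices.1 hw)
    rcases (hb v hv).2 with h | h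
    · rw [← he, h] at hwb
      exact hwb.symm
    rcases (hb w hw).2 with h' | h'
    · rw [he, h'] at hvb
      exact hvb
    · exact hs (h.symm.trans (he.trans h'))
  calc cost f + #(broadcastVertices f) = ∑ v ∈ broadcastVertices f, (f v + 1) := by
        rw [sum_add_distrib, card_eq_sum_ones, cost_eq_sum_broadcastVertices]
    _ ≤ ∑ v ∈ broadcastVertices f, #(segment G v (b v)) := sum_le_sum fun v hv =>
        (hb v hv).1.1 ▸ dist_add_one_le_card_segment hG v (b v)
    _ = #((broadcastVertices f).biUnion fun v => segment G v (b v)) := by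
        refine (card_biUnion fun v hv w hw hvw => ?_).symm
        exact disjoint_segment_of_isAnchor hG (mem_broadcastVertices.1 hv)
          (mem_broadcastVertices.1 hw) hvw (fun he => hvw (hinj v hv w hw he)) (hb v hv).1
          (hb w hw).1
    _ ≤ #(heardVertices G f) := card_le_card <| biUnion_subset.2 fun v hv z hz => by
        simp only [heardVertices, mem_filter, mem_univ, true_and]
        exact ⟨v, (hb v hv).1.mem_hears_of_mem_segment (mem_broadcastVertices.1 hv) hz⟩

end general

section cycleGraph

variable {n : ℕ} {f : Fin n → ℕ}

theorem le_upperBroadcastIrredundance_cycleGraph (hn : 4 ≤ n) :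
    2 * (n / 2) - 2 ≤ upperBroadcastIrredundance (cycleGraph n) := by
  classical
  let a : Fin n := ⟨n / 2 - 1, by omega⟩
  let a' : Fin n := ⟨n / 2, by omega⟩
  let g : Fin n → ℕ := fun x => if x ∈ ({a, a'} : Finset (Fin n)) then n / 2 - 1 else 0
  have hg (x : Fin n) : g x = if x.val = n / 2 - 1 ∨ x.val = n / 2 then n / 2 - 1 else 0 := by
    simp only [g, a, a', mem_insert, mem_singleton, Fin.ext_iff]
  have hirr : IsIrredundant (cycleGraph n) g := by
    refine isIrredundant_of_forall_exists_hears_eq_singleton fun v hv => ?_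
    rw [hg] at hv
    -- the private border vertices of `a` and `a'` are `0` and `2 * (n / 2) - 1`
    obtain ⟨b, hb⟩ : ∃ b : Fin n,
        v.val = n / 2 - 1 ∧ b.val = 0 ∨ v.val = n / 2 ∧ b.val = 2 * (n / 2) - 1 := by
      by_cases h : v.val = n / 2 - 1
      · exact ⟨⟨0, by omega⟩, .inl ⟨h, rfl⟩⟩
      · exact ⟨⟨2 * (n / 2) - 1, by omega⟩, .inr ⟨by split_ifs at hv <;> omega, rfl⟩⟩
    refine ⟨b, Set.ext fun x => ?_, ?_⟩
    · simp only [hears, Set.mem_ofPred_eq, Set.mem_singleton_iff, hg, Fin.ext_iff,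
        dist_cycleGraph (by omega : 2 ≤ n)]
      split_ifs <;> omega
    · rw [dist_cycleGraph (by omega), hg]
      split_ifs <;> omega
  have hcost : cost g = 2 * (n / 2 - 1) := by
    have haa' : a ≠ a' := by simp only [a, a', ne_eq, Fin.ext_iff]; omega
    rw [cost, sum_ite_mem, univ_inter, sum_const, card_pair haa', smul_eq_mul]
  have := hirr.cost_le_upperBroadcastIrredundance
  omega

theorem IsIrredundant.cost_lt_of_hears_eq_empty [NeZero n] (hn : 3 ≤ n)
    (hf : IsIrredundant (cycleGraph n) f) {j : Fin n} (hj : hears (cycleGraph n) f j = ∅)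
    (hj' : hears (cycleGraph n) f (j + 1) = ∅) :
    cost f < upperBroadcastIrredundance (cycleGraph n) := by
  have hadj := cycleGraph_adj_add_one (n := n) (by omega)
  have hcount : cost f + #(broadcastVertices f) ≤ n - 2 :=
    (hf.cost_add_card_le (cycleGraph_connected_of_pos (by omega)) (add_left_injective 1) hadj).trans
      ((card_heardVertices_le hj hj' (hadj j).ne).trans_eq (by rw [Fintype.card_fin]))
  have hsmall : ∀ a ∈ broadcastVertices f, f a + 1 ≤ n / 2 := fun a ha =>
    (lt_dist_of_hears_eq_empty hj (mem_broadcastVertices.1 ha)).trans_le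
      (dist_cycleGraph_le_half (by omega) j a)
  have hcost : cost f ≤ #(broadcastVertices f) * (n / 2 - 1) := by
    rw [cost_eq_sum_broadcastVertices]
    exact sum_le_card_nsmul _ _ _ fun a ha => Nat.le_sub_one_of_lt (hsmall a ha)
  have h₁ := one_le_upperBroadcastIrredundance (hadj j)
  rcases (broadcastVertices f).eq_empty_or_nonempty with h₀ | ⟨a, ha⟩
  · rw [h₀, card_empty, zero_mul] at hcost
    omega
  have h₂ := le_upperBroadcastIrredundance_cycleGraph (n := n)
    (by have := hsmall a ha; have := mem_broadcastVertices.1 ha; omega)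
  obtain hk | hk : #(broadcastVertices f) = 1 ∨ 2 ≤ #(broadcastVertices f) := by
    have := card_pos.2 ⟨a, ha⟩
    omega
  · rw [hk, one_mul] at hcost
    omega
  · omega

end cycleGraph

end Broadcast

open Broadcast in
/-- If f is an IR_b-broadcast on C_n and H_f(x_i) = ∅, then
H_f(x_{i-1}) ≠ ∅ and H_f(x_{i+1}) ≠ ∅. -/
theorem hears_ne_empty_of_optimal_irredundant_cycleGraph (n : ℕ) (hn : 3 ≤ n)
    (f : Fin n → ℕ) (hf : IsIrredundant (SimpleGraph.cycleGraph n) f)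
    (hopt : cost f = upperBroadcastIrredundance (SimpleGraph.cycleGraph n))
    (i : Fin n) (hi : hears (SimpleGraph.cycleGraph n) f i = ∅) :
    hears (SimpleGraph.cycleGraph n) f (i - ⟨1, by omega⟩) ≠ ∅ ∧
    hears (SimpleGraph.cycleGraph n) f (i + ⟨1, by omega⟩) ≠ ∅ := by
  have : NeZero n := ⟨by omega⟩
  have hone : (⟨1, by omega⟩ : Fin n) = 1 := Fin.ext (Nat.mod_eq_of_lt (by omega)).symm
  rw [hone]
  refine ⟨fun h => ?_, fun h => ?_⟩
  · exact (hf.cost_lt_of_hears_eq_empty hn h (by rwa [sub_add_cancel])).ne hopt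
  · exact (hf.cost_lt_of_hears_eq_empty hn hi h).ne hopt
end

section
/- For every integer n ≥ 2, the broadcast irredundance number of the path P_n equals its broadcast domination number and both equal ⌈n/3⌉, i.e. ir_b(P_n) = γ_b(P_n) = ⌈n/3⌉. -/
/-!
A minimal dominating broadcast of a connected graph is maximal irredundant, so
`ir_b ≤ γ_b`, and broadcasting with strength 1 from every third vertex of `P_n` shows
`γ_b(P_n) ≤ ⌈n/3⌉`.

For the lower bound let `f` be maximal irredundant on `P_n`. If `u` hears no broadcast,
raising `f u` to 1 must empty the private border of some broadcast vertex `x`: then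
`f x < d(u, x)`, every private border vertex of `x` is adjacent to `u` (so on a path `x`
determines `u`), and either `f x ≥ 2` or `x` also hears another broadcast vertex. Count each
vertex with the number of broadcasts it hears; a broadcast of strength `r` reaches at most
`2r + 1` vertices of a path, and the spare `f x - 1` and the doubly heard `x` pay for the unheard
vertices, giving `n ≤ 3 σ(f)`.
-/
open SimpleGraph

namespace SimpleGraph

variable {n : ℕ}

theorem Walk.natDist_le_length_pathGraph {u v : Fin n} (p : (pathGraph n).Walk u v) :
    Nat.dist u v ≤ p.length := by
  induction p with
  | nil => simp
  | @cons a b c hadj p ih =>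
    have hab : Nat.dist a b = 1 := by
      rcases pathGraph_adj.1 hadj with h | h <;> simp [Nat.dist] <;> omega
    have := Nat.dist.triangle_inequality a b c
    rw [Walk.length_cons]
    omega

theorem pathGraph_dist_le_sub {u v : Fin n} (huv : u ≤ v) :
    (pathGraph n).dist u v ≤ v.val - u.val := by
  obtain ⟨k, hk⟩ : ∃ k, v.val - u.val = k := ⟨_, rfl⟩
  induction k generalizing v with
  | zero => simp [Fin.le_antisymm (by omega : v ≤ u) huv]
  | succ k ih =>
    let w : Fin n := ⟨v - 1, by omega⟩
    have hw : w.val = v.val - 1 := rfl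
    have hwv : (pathGraph n).Adj w v := pathGraph_adj.2 (.inl (by omega))
    calc (pathGraph n).dist u v ≤ (pathGraph n).dist u w + (pathGraph n).dist w v :=
          hwv.reachable.dist_triangle_right u
      _ ≤ k + 1 := by
          rw [dist_eq_one_iff_adj.2 hwv]
          have := ih (v := w) (Fin.le_def.2 (by omega)) (by omega)
          omega
      _ = v.val - u.val := hk.symm

theorem pathGraph_dist (u v : Fin n) : (pathGraph n).dist u v = Nat.dist u v := by
  obtain ⟨p, hp⟩ := (pathGraph_preconnected n u v).exists_walk_length_eq_dist
  refine le_antisymm ?_ (hp ▸ p.natDist_le_length_pathGraph)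
  rcases le_total u v with h | h
  · simpa [Nat.dist, Fin.le_def.1 h] using pathGraph_dist_le_sub h
  · rw [dist_comm]
    simpa [Nat.dist, Fin.le_def.1 h] using pathGraph_dist_le_sub h

open Finset in
theorem card_filter_pathGraph_dist_le (x : Fin n) (r : ℕ) :
    #{u | (pathGraph n).dist u x ≤ r} ≤ 2 * r + 1 :=
  calc #{u | (pathGraph n).dist u x ≤ r}
      ≤ #(Icc (x.val - r) (x.val + r)) := by
        refine card_le_card_of_injOn Fin.val (fun u hu => ?_) Fin.val_injective.injOn
        simp only [coe_filter_univ, Set.mem_ofPred_eq, pathGraph_dist, Nat.dist] at hu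
        simp only [coe_Icc, Set.mem_Icc]
        omega
    _ ≤ 2 * r + 1 := by simp only [Nat.card_Icc]; omega

theorem pathGraph_eq_of_adj_of_dist_lt {x w u₁ u₂ : Fin n} (hwx : w ≠ x)
    (h₁ : (pathGraph n).Adj w u₁) (h₂ : (pathGraph n).Adj w u₂)
    (hd₁ : (pathGraph n).dist w x < (pathGraph n).dist u₁ x)
    (hd₂ : (pathGraph n).dist w x < (pathGraph n).dist u₂ x) : u₁ = u₂ := by
  rw [pathGraph_adj] at h₁ h₂
  rw [Ne, Fin.ext_iff] at hwx
  simp only [pathGraph_dist, Nat.dist] at hd₁ hd₂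
  exact Fin.ext (by omega)

end SimpleGraph

namespace Broadcast

section

variable {V : Type*} {G : SimpleGraph V} {f g : V → ℕ} {u v w y : V} {k : ℕ}

theorem mem_hears : v ∈ hears G f u ↔ 1 ≤ f v ∧ G.dist u v ≤ f v := Iff.rfl

theorem self_mem_hears (hv : 1 ≤ f v) : v ∈ hears G f v := by
  simpa [mem_hears] using hv

theorem hears_mono (hfg : f ≤ g) : hears G f u ⊆ hears G g u :=
  fun x hx => ⟨hx.1.trans (hfg x), hx.2.trans (hfg x)⟩

theorem mem_hears_update_of_ne [DecidableEq V] (hy : y ≠ v) :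
    y ∈ hears G (Function.update f v k) u ↔ y ∈ hears G f u := by
  simp only [mem_hears, Function.update_of_ne hy]

theorem mem_hears_update_self [DecidableEq V] :
    v ∈ hears G (Function.update f v k) u ↔ 1 ≤ k ∧ G.dist u v ≤ k := by
  simp only [mem_hears, Function.update_self]

theorem hears_update_eq_of_lt_dist [DecidableEq V] (hfu : f u < G.dist w u)
    (hk : k < G.dist w u) :
    hears G (Function.update f u k) w = hears G f w := by
  ext y
  rcases eq_or_ne y u with rfl | hy
  · rw [mem_hears_update_self, mem_hears]
    omega
  · exact mem_hears_update_of_ne hy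

theorem eq_zero_of_hears_eq_empty (hu : hears G f u = ∅) : f u = 0 := by
  by_contra h
  exact Set.notMem_empty u (hu ▸ self_mem_hears (by omega))

theorem mem_privateNbhd : w ∈ privateNbhd G f v ↔ hears G f w = {v} := Iff.rfl

theorem privateBorder_subset_privateNbhd : privateBorder G f v ⊆ privateNbhd G f v := by
  unfold privateBorder
  split_ifs with h
  · exact h.2.symm.subset
  · exact fun w hw => hw.1

theorem mem_privateBorder_of_dist_eq (hw : w ∈ privateNbhd G f v) (hd : G.dist w v = f v) :
    w ∈ privateBorder G f v := by
  unfold privateBorder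
  split_ifs with h
  · rwa [h.2] at hw
  · exact ⟨hw, hd⟩

theorem dist_eq_of_mem_privateBorder (hv : ¬(f v = 1 ∧ v ∈ privateNbhd G f v))
    (hw : w ∈ privateBorder G f v) : G.dist w v = f v := by
  have hv' : ¬(f v = 1 ∧ privateNbhd G f v = {v}) := fun h => hv ⟨h.1, h.2 ▸ rfl⟩
  rw [privateBorder, if_neg hv'] at hw
  exact hw.2

theorem privateBorder_nonempty_of_eq_one (hG : G.Preconnected) (hv : f v = 1)
    (hne : (privateNbhd G f v).Nonempty) : (privateBorder G f v).Nonempty := by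
  by_cases hPN : privateNbhd G f v = {v}
  · exact ⟨v, by rw [privateBorder, if_pos ⟨hv, hPN⟩]; rfl⟩
  obtain ⟨w, hw, hwv⟩ : ∃ w ∈ privateNbhd G f v, w ≠ v := by
    by_contra! h
    exact hPN (Set.eq_singleton_iff_nonempty_unique_mem.2 ⟨hne, h⟩)
  have hvw : v ∈ hears G f w := (mem_privateNbhd.1 hw).symm ▸ rfl
  have := (hG w v).pos_dist_of_ne hwv
  exact ⟨w, mem_privateBorder_of_dist_eq hw (by have := hvw.2; omega)⟩

end

section

variable {V : Type*} [Fintype V] {G : SimpleGraph V} {f : V → ℕ} {u : V}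

theorem one_le_ecc [Nontrivial V] (hG : G.Preconnected) (v : V) : 1 ≤ ecc G v := by
  obtain ⟨w, hw⟩ := exists_ne v
  exact (hG v w).pos_dist_of_ne hw.symm |>.trans_le (Finset.le_sup (Finset.mem_univ w))

theorem cost_mono : Monotone (cost : (V → ℕ) → ℕ) :=
  fun _ _ h => Finset.sum_le_sum fun v _ => h v

theorem IsDominating.isMaximalIrredundant (hf : IsDominating G f) (hirr : IsIrredundant G f) :
    IsMaximalIrredundant G f := by
  refine ⟨hirr, fun g hg hfg => ?_⟩
  by_contra hne
  obtain ⟨-, v, hv⟩ := Pi.lt_def.1 (lt_of_le_of_ne hfg (Ne.symm hne))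
  obtain ⟨w, hw⟩ := hg.2 v (by omega)
  have hwv := mem_privateNbhd.1 (privateBorder_subset_privateNbhd hw)
  obtain ⟨x, hx⟩ := hf.2 w
  obtain rfl : x = v := by simpa [hwv] using hears_mono (G := G) (u := w) hfg hx
  have := dist_eq_of_mem_privateBorder (by have := hx.1; omega) hw
  have := hx.2
  omega

theorem IsMinimalDominating.isIrredundant (hG : G.Preconnected) (hf : IsMinimalDominating G f) :
    IsIrredundant G f := by
  classical
  refine ⟨hf.1.1, fun v hv => ?_⟩
  set g := Function.update f v (f v - 1)
  have hgf : g ≤ f := update_le_self_iff.2 (Nat.sub_le _ _)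
  obtain ⟨u, hu⟩ : ∃ u, hears G g u = ∅ := by
    by_contra! h
    have hgd : IsDominating G g := ⟨fun x => (hgf x).trans (hf.1.1 x), h⟩
    have := congrFun (hf.2 g hgd hgf) v
    simp only [g, Function.update_self] at this
    omega
  have hPN : u ∈ privateNbhd G f v := by
    obtain ⟨x, hx⟩ := hf.1.2 u
    refine Set.eq_singleton_iff_nonempty_unique_mem.2 ⟨⟨x, hx⟩, fun y hy => ?_⟩
    by_contra hyv
    exact Set.notMem_empty y (hu ▸ (mem_hears_update_of_ne hyv).2 hy)
  have hvu : v ∈ hears G f u := (mem_privateNbhd.1 hPN).symm ▸ rfl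
  have hvu' : v ∉ hears G g u := hu ▸ Set.notMem_empty v
  rw [mem_hears_update_self] at hvu'
  rcases eq_or_ne (f v) 1 with h1 | h1
  · exact privateBorder_nonempty_of_eq_one hG h1 ⟨u, hPN⟩
  · exact ⟨u, mem_privateBorder_of_dist_eq hPN (by have := hvu.2; omega)⟩

theorem IsDominating.exists_isMinimalDominating_le (hf : IsDominating G f) :
    ∃ g ≤ f, IsMinimalDominating G g := by
  obtain ⟨g, hgf, hg⟩ := exists_minimal_le_of_wellFoundedLT (IsDominating G) f hf
  exact ⟨g, hgf, hg.1, fun h hh hhg => le_antisymm hhg (hg.le_of_le hh hhg)⟩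

theorem IsDominating.exists_isMaximalIrredundant_le (hG : G.Preconnected)
    (hf : IsDominating G f) : ∃ g ≤ f, IsMaximalIrredundant G g := by
  obtain ⟨g, hgf, hg⟩ := hf.exists_isMinimalDominating_le
  exact ⟨g, hgf, hg.1.isMaximalIrredundant (hg.isIrredundant hG)⟩

theorem broadcastDomination_le_cost (hf : IsDominating G f) : broadcastDomination G ≤ cost f :=
  Nat.sInf_le ⟨f, hf, rfl⟩

theorem broadcastIrredundance_le_cost (hG : G.Preconnected) (hf : IsDominating G f) :
    broadcastIrredundance G ≤ cost f := by
  obtain ⟨g, hgf, hg⟩ := hf.exists_isMaximalIrredundant_le hG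
  exact (Nat.sInf_le ⟨g, hg, rfl⟩ : broadcastIrredundance G ≤ cost g).trans (cost_mono hgf)

theorem le_broadcastIrredundance (hG : G.Preconnected) (hf : IsDominating G f) {c : ℕ}
    (h : ∀ g, IsMaximalIrredundant G g → c ≤ cost g) : c ≤ broadcastIrredundance G := by
  obtain ⟨g, -, hg⟩ := hf.exists_isMaximalIrredundant_le hG
  exact le_csInf ⟨_, g, hg, rfl⟩ fun _ ⟨g, hg, hgc⟩ => hgc ▸ h g hg

theorem broadcastIrredundance_le_broadcastDomination (hG : G.Preconnected)
    (hf : IsDominating G f) : broadcastIrredundance G ≤ broadcastDomination G := by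
  obtain ⟨g, hg, hgc⟩ := Nat.sInf_mem
    (⟨_, f, hf, rfl⟩ : {c | ∃ f, IsDominating G f ∧ cost f = c}.Nonempty)
  rw [broadcastDomination, ← hgc]
  exact broadcastIrredundance_le_cost hG hg

theorem IsMaximalIrredundant.exists_privateBorder_update_eq_empty [DecidableEq V]
    (hG : G.Preconnected) (hu₁ : 1 ≤ ecc G u) (hf : IsMaximalIrredundant G f)
    (hu : hears G f u = ∅) :
    ∃ x ≠ u, 1 ≤ f x ∧ privateBorder G (Function.update f u 1) x = ∅ := by
  set g := Function.update f u 1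
  have hfu := eq_zero_of_hears_eq_empty hu
  obtain ⟨x, hgx, hPBg⟩ : ∃ x, 1 ≤ g x ∧ privateBorder G g x = ∅ := by
    by_contra! h
    have hg : IsIrredundant G g := ⟨fun v => by
      rcases eq_or_ne v u with rfl | hv
      · simpa [g] using hu₁
      · simpa [g, hv] using hf.1.1 v, h⟩
    have := congrFun (hf.2 g hg (le_update_self_iff.2 (by omega))) u
    simp [g, hfu] at this
  have hxu : x ≠ u := by
    rintro rfl
    have hhu : hears G g x = {x} := by
      ext y
      rcases eq_or_ne y x with rfl | hy
      · simp [g, mem_hears_update_self]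
      · exact iff_of_false (fun h => Set.notMem_empty y (hu ▸ (mem_hears_update_of_ne hy).1 h))
          hy
    have := privateBorder_nonempty_of_eq_one hG (by simp [g]) ⟨x, hhu⟩
    simp [hPBg] at this
  exact ⟨x, hxu, by simpa [g, hxu] using hgx, hPBg⟩

theorem IsMaximalIrredundant.exists_privateBorder_adj_of_hears_eq_empty
    (hG : G.Preconnected) (hu₁ : 1 ≤ ecc G u) (hf : IsMaximalIrredundant G f)
    (hu : hears G f u = ∅) :
    ∃ x, 1 ≤ f x ∧ f x < G.dist u x ∧ (2 ≤ f x ∨ (hears G f x).Nontrivial) ∧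
      ∀ w ∈ privateBorder G f x, G.dist w x = f x ∧ G.Adj w u := by
  classical
  obtain ⟨x, hxu, hx, hPBg⟩ := hf.exists_privateBorder_update_eq_empty hG hu₁ hu
  have hfu := eq_zero_of_hears_eq_empty hu
  set g := Function.update f u 1
  have hgx : g x = f x := Function.update_of_ne hxu _ _
  have hdux : f x < G.dist u x := by
    have : x ∉ hears G f u := hu ▸ Set.notMem_empty x
    rw [mem_hears] at this
    omega
  have hPN : ∀ w, 1 < G.dist w u → w ∈ privateNbhd G f x → w ∈ privateNbhd G g x :=
    fun w hw hwx => by rwa [mem_privateNbhd, hears_update_eq_of_lt_dist (by omega) hw]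
  have hx₁ : ¬(f x = 1 ∧ x ∈ privateNbhd G f x) := by
    rintro ⟨h1, hxx⟩
    have hxu' : 1 < G.dist x u := by rw [SimpleGraph.dist_comm]; omega
    have := privateBorder_nonempty_of_eq_one hG (hgx.trans h1) ⟨x, hPN x hxu' hxx⟩
    simp [hPBg] at this
  refine ⟨x, hx, hdux, ?_, fun w hw => ?_⟩
  · by_contra! h
    exact hx₁ ⟨by omega, h.2.eq_singleton_of_mem (self_mem_hears hx)⟩
  have hwx := privateBorder_subset_privateNbhd hw
  have hd := dist_eq_of_mem_privateBorder hx₁ hw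
  have hwu : w ≠ u := by
    rintro rfl
    simp [mem_privateNbhd, hu] at hwx
  have hwu' : G.dist w u ≤ 1 := by
    by_contra! hwu'
    exact Set.notMem_empty w (hPBg ▸ mem_privateBorder_of_dist_eq (hPN w hwu' hwx) (hgx ▸ hd))
  have := (hG w u).pos_dist_of_ne hwu
  exact ⟨hd, SimpleGraph.dist_eq_one_iff_adj.1 (by omega)⟩

open Finset in
theorem card_le_three_mul_cost (hball : ∀ x r, #{u | G.dist u x ≤ r} ≤ 2 * r + 1)
    (φ : V → V) (hφ : Set.InjOn φ {u | hears G f u = ∅})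
    (hφ₂ : ∀ u, hears G f u = ∅ → 2 ≤ f (φ u) ∨ (hears G f (φ u)).Nontrivial) :
    Fintype.card V ≤ 3 * cost f := by
  classical
  set H : V → Finset V := fun u => {x | x ∈ hears G f u}
  have hH : ∀ u, (H u : Set V) = hears G f u := fun u => coe_filter_univ _
  have hsplit : #{u | hears G f u = ∅} + #{u | ¬hears G f u = ∅} = Fintype.card V :=
    card_filter_add_card_filter_not _
  have hheard : #{u | ¬hears G f u = ∅} + #{u | (hears G f u).Nontrivial} ≤ ∑ u, #(H u) := by
    rw [card_filter, card_filter, ← sum_add_distrib]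
    refine sum_le_sum fun u _ => ?_
    have h₁ : ¬hears G f u = ∅ → 0 < #(H u) := fun h =>
      card_pos.2 (coe_nonempty.1 (hH u ▸ Set.nonempty_iff_ne_empty.2 h))
    have h₂ : (hears G f u).Nontrivial → 1 < #(H u) := fun h =>
      one_lt_card_iff_nontrivial.2 (by rwa [Finset.Nontrivial, hH u])
    split_ifs <;> grind
  have hcount : ∑ u, #(H u) = ∑ x, #{u | x ∈ hears G f u} := by
    simp only [H, card_filter]
    exact sum_comm
  have hball' : ∀ x, #{u | x ∈ hears G f u} + (if 2 ≤ f x then 1 else 0) ≤ 3 * f x := by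
    intro x
    rcases Nat.eq_zero_or_pos (f x) with h | h
    · simp [mem_hears, h]
    · have hsub : ({u | x ∈ hears G f u} : Finset V) ⊆ ({u | G.dist u x ≤ f x} : Finset V) :=
        monotone_filter_right _ fun u _ (hu : x ∈ hears G f u) => hu.2
      have := (card_le_card hsub).trans (hball x (f x))
      split_ifs <;> omega
  have hunheard : #{u | hears G f u = ∅} ≤ #{x | 2 ≤ f x} + #{x | (hears G f x).Nontrivial} :=
    (card_le_card_of_injOn φ (fun u hu => by simpa using hφ₂ u (by simpa using hu))
      (by simpa using hφ)).trans (card_union_le _ _)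
  have htotal := sum_le_sum fun x (_ : x ∈ univ) => hball' x
  rw [sum_add_distrib, ← card_filter, ← mul_sum] at htotal
  rw [cost]
  omega

end

open Finset SimpleGraph

variable {n : ℕ}

theorem exists_isDominating_pathGraph (hn : 2 ≤ n) :
    ∃ f, IsDominating (pathGraph n) f ∧ cost f ≤ (n + 2) / 3 := by
  have := Fin.nontrivial_iff_two_le.2 hn
  let P : Fin n → Prop := fun v => v.val % 3 = 1 ∨ (v.val % 3 = 0 ∧ v.val + 1 = n)
  refine ⟨fun v => if P v then 1 else 0, ⟨fun v => ?_, fun u => ?_⟩, ?_⟩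
  · exact (ite_le_one le_rfl zero_le_one).trans (one_le_ecc (pathGraph_preconnected n) v)
  · refine ⟨⟨min (3 * (u.val / 3) + 1) (n - 1), by omega⟩, ?_⟩
    simp only [mem_hears, pathGraph_dist, Nat.dist, P]
    split_ifs <;> omega
  · rw [cost, ← card_filter]
    calc #{v | P v} ≤ #(range ((n + 2) / 3)) := by
          refine card_le_card_of_injOn (fun v => v.val / 3) (fun v hv => ?_) fun v hv w hw h => ?_
          · simp only [coe_filter_univ, Set.mem_ofPred_eq, P] at hv
            simp only [coe_range, Set.mem_Iio]
            omega
          · simp only [coe_filter_univ, Set.mem_ofPred_eq, P] at hv hw h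
            exact Fin.ext (by omega)
      _ = (n + 2) / 3 := card_range _

theorem IsMaximalIrredundant.le_three_mul_cost_pathGraph (hn : 2 ≤ n) {f : Fin n → ℕ}
    (hf : IsMaximalIrredundant (pathGraph n) f) : n ≤ 3 * cost f := by
  have := Fin.nontrivial_iff_two_le.2 hn
  have hG := pathGraph_preconnected n
  choose! φ hφ₁ hφd hφ₂ hφPB using fun u (hu : hears (pathGraph n) f u = ∅) =>
    hf.exists_privateBorder_adj_of_hears_eq_empty hG (one_le_ecc hG u) hu
  have hinj : Set.InjOn φ {u | hears (pathGraph n) f u = ∅} := by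
    intro u₁ hu₁ u₂ hu₂ h
    have hx := hφ₁ u₁ hu₁
    have hd₁ := hφd u₁ hu₁
    have hd₂ := hφd u₂ hu₂
    have hPB₂ := hφPB u₂ hu₂
    rw [← h] at hd₂ hPB₂
    obtain ⟨w, hw⟩ := hf.1.2 _ hx
    obtain ⟨hwd, hw₁⟩ := hφPB u₁ hu₁ w hw
    have hwx : w ≠ φ u₁ := by
      rintro rfl
      rw [SimpleGraph.dist_self] at hwd
      omega
    exact pathGraph_eq_of_adj_of_dist_lt hwx hw₁ (hPB₂ w hw).2 (by omega) (by omega)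
  simpa using card_le_three_mul_cost card_filter_pathGraph_dist_le φ hinj hφ₂

end Broadcast

open Broadcast in
/-- For every integer n ≥ 2, ir_b(P_n) = γ_b(P_n) = ⌈n/3⌉. -/
theorem broadcastIrredundance_pathGraph (n : ℕ) (hn : 2 ≤ n) :
    broadcastIrredundance (SimpleGraph.pathGraph n) =
      broadcastDomination (SimpleGraph.pathGraph n) ∧
    broadcastDomination (SimpleGraph.pathGraph n) = (n + 2) / 3 := by
  have hG := pathGraph_preconnected n
  obtain ⟨f, hf, hfc⟩ := exists_isDominating_pathGraph hn
  have hlow : (n + 2) / 3 ≤ broadcastIrredundance (pathGraph n) :=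
    le_broadcastIrredundance hG hf fun g hg => by
      have := hg.le_three_mul_cost_pathGraph hn
      omega
  have := broadcastIrredundance_le_broadcastDomination hG hf
  have := broadcastDomination_le_cost hf
  omega
end
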